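/- Let P be a pointed category with weak finite limits. The regular completion of P is a normal category if and only if every internal reflexive graph in P satisfies (∗π₀) with respect to the ideal of null morphisms of P. -/

import Mathlib

open CategoryTheory CategoryTheory.Limits

universe v u

variable {C : Type u} [Category.{v} C]

/-- A class of morphisms of a category. -/
abbrev MorClass (C : Type u) [Category.{v} C] :=
  ∀ ⦃X Y : C⦄, (X ⟶ Y) → Prop

/-- An ideal of morphisms: closed under pre- and post-composition with arbitrary morphisms. -/
def IsMorIdeal (N : MorClass C) : Prop :=
  (∀ ⦃X Y Z : C⦄ (f : X ⟶ Y) (g : Y ⟶ Z), N g → N (f ≫ g)) ∧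
  (∀ ⦃X Y Z : C⦄ (f : X ⟶ Y) (g : Y ⟶ Z), N f → N (f ≫ g))

/-- `k` is a weak `N`-kernel of `f`. -/
def IsWeakKernel (N : MorClass C) {K X Y : C} (f : X ⟶ Y) (k : K ⟶ X) : Prop :=
  N (k ≫ f) ∧ ∀ ⦃K' : C⦄ (k' : K' ⟶ X), N (k' ≫ f) → ∃ u : K' ⟶ K, u ≫ k = k'

/-- `k` is an `N`-kernel of `f` (unique factorization). -/
def IsNKernel (N : MorClass C) {K X Y : C} (f : X ⟶ Y) (k : K ⟶ X) : Prop :=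
  N (k ≫ f) ∧ ∀ ⦃K' : C⦄ (k' : K' ⟶ X), N (k' ≫ f) → ∃! u : K' ⟶ K, u ≫ k = k'

def HasWeakKernels (N : MorClass C) : Prop :=
  ∀ ⦃X Y : C⦄ (f : X ⟶ Y), ∃ (K : C) (k : K ⟶ X), IsWeakKernel N f k

def HasNKernels (N : MorClass C) : Prop :=
  ∀ ⦃X Y : C⦄ (f : X ⟶ Y), ∃ (K : C) (k : K ⟶ X), IsNKernel N f k

/-- The condition (∗π₀) for a pair of parallel morphisms: for a weak `N`-kernel `k` of `f₁`
and any morphism `g`, `g f₁ k = g f₂ k ⟺ g f₁ = g f₂`. -/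
def StarPi0 (N : MorClass C) {X Y : C} (f₁ f₂ : X ⟶ Y) : Prop :=
  ∀ ⦃K : C⦄ (k : K ⟶ X), IsWeakKernel N f₁ k →
    ∀ ⦃Z : C⦄ (g : Y ⟶ Z), (k ≫ f₁ ≫ g = k ≫ f₂ ≫ g ↔ f₁ ≫ g = f₂ ≫ g)

/-- `(u, v)` is a weak kernel pair of `f`. -/
def IsWeakKernelPair {P X Y : C} (f : X ⟶ Y) (u v : P ⟶ X) : Prop :=
  u ≫ f = v ≫ f ∧ ∀ ⦃Q : C⦄ (u' v' : Q ⟶ X), u' ≫ f = v' ≫ f →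
    ∃ w : Q ⟶ P, w ≫ u = u' ∧ w ≫ v = v'

/-- `(u, v)` is the kernel pair of `f`. -/
def IsKernelPairOf {P X Y : C} (f : X ⟶ Y) (u v : P ⟶ X) : Prop :=
  u ≫ f = v ≫ f ∧ ∀ ⦃Q : C⦄ (u' v' : Q ⟶ X), u' ≫ f = v' ≫ f →
    ∃! w : Q ⟶ P, w ≫ u = u' ∧ w ≫ v = v'

def HasWeakKernelPairs (C : Type u) [Category.{v} C] : Prop :=
  ∀ ⦃X Y : C⦄ (f : X ⟶ Y), ∃ (P : C) (u v : P ⟶ X), IsWeakKernelPair f u v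

def HasKernelPairs (C : Type u) [Category.{v} C] : Prop :=
  ∀ ⦃X Y : C⦄ (f : X ⟶ Y), ∃ (P : C) (u v : P ⟶ X), IsKernelPairOf f u v

/-- `f` is a coequalizer of the pair `(u, v)`. -/
def IsCoequalizerOf {P X Y : C} (u v : P ⟶ X) (f : X ⟶ Y) : Prop :=
  u ≫ f = v ≫ f ∧ ∀ ⦃Z : C⦄ (g : X ⟶ Z), u ≫ g = v ≫ g → ∃! h : Y ⟶ Z, f ≫ h = g

/-- `f` is a regular epimorphism: a coequalizer of some pair. -/
def IsRegEpi {X Y : C} (f : X ⟶ Y) : Prop :=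
  ∃ (P : C) (u v : P ⟶ X), IsCoequalizerOf u v f

/-- `(p₁, p₂)` is a pullback of `(f, g)`. -/
def IsPullbackSq {P X Y Z : C} (p₁ : P ⟶ X) (p₂ : P ⟶ Y) (f : X ⟶ Z) (g : Y ⟶ Z) : Prop :=
  p₁ ≫ f = p₂ ≫ g ∧ ∀ ⦃Q : C⦄ (q₁ : Q ⟶ X) (q₂ : Q ⟶ Y), q₁ ≫ f = q₂ ≫ g →
    ∃! w : Q ⟶ P, w ≫ p₁ = q₁ ∧ w ≫ p₂ = q₂

/-- A regular category: finitely complete, kernel pairs have coequalizers, and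
regular epimorphisms are stable under pullback. -/
structure IsRegularCat (C : Type u) [Category.{v} C] : Prop where
  hasFiniteLimits : HasFiniteLimits C
  coeqOfKernelPairs : ∀ ⦃P X Y : C⦄ (f : X ⟶ Y) (u v : P ⟶ X), IsKernelPairOf f u v →
    ∃ (Q : C) (q : X ⟶ Q), IsCoequalizerOf u v q
  regEpiStable : ∀ ⦃P X Y Z : C⦄ (p₁ : P ⟶ X) (p₂ : P ⟶ Y) (f : X ⟶ Z) (g : Y ⟶ Z),
    IsPullbackSq p₁ p₂ f g → IsRegEpi g → IsRegEpi p₁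

/-- `P` (a class of objects, regarded as a full subcategory) is a projective cover of `C`. -/
structure IsProjectiveCover (P : Set C) : Prop where
  proj : ∀ ⦃X : C⦄, X ∈ P → ∀ ⦃A B : C⦄ (e : A ⟶ B), IsRegEpi e →
    ∀ f : X ⟶ B, ∃ g : X ⟶ A, g ≫ e = f
  covers : ∀ X : C, ∃ (Q : C) (_ : Q ∈ P) (e : Q ⟶ X), IsRegEpi e

/-- An ideal of the full subcategory on `P`, encoded as a class of morphisms of `C`
supported on `P`-objects and closed under composition with `P`-morphisms. -/
def IsMorIdealOn (P : Set C) (N : MorClass C) : Prop :=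
  (∀ ⦃X Y : C⦄ (f : X ⟶ Y), N f → X ∈ P ∧ Y ∈ P) ∧
  (∀ ⦃X Y Z : C⦄ (f : X ⟶ Y) (g : Y ⟶ Z), X ∈ P → N g → N (f ≫ g)) ∧
  (∀ ⦃X Y Z : C⦄ (f : X ⟶ Y) (g : Y ⟶ Z), Z ∈ P → N f → N (f ≫ g))

/-- The extension `N^C` of an ideal `N` of the full subcategory `P` to `C`. -/
def extClass (P : Set C) (N : MorClass C) : MorClass C := fun X Y f =>
  ∃ (A B : C) (_ : A ∈ P) (_ : B ∈ P) (n : A ⟶ B) (e : A ⟶ X) (e' : B ⟶ Y),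
    IsRegEpi e ∧ IsRegEpi e' ∧ N n ∧ e ≫ f = n ≫ e'

/-- The restriction `M_P` of an ideal `M` of `C` to the full subcategory `P`. -/
def restClass (P : Set C) (M : MorClass C) : MorClass C := fun X Y f =>
  X ∈ P ∧ Y ∈ P ∧ M f

/-- `k` is a weak `N`-kernel of `f` computed in the full subcategory `P`. -/
def IsWeakKernelOn (P : Set C) (N : MorClass C) {K X Y : C} (f : X ⟶ Y) (k : K ⟶ X) : Prop :=
  K ∈ P ∧ N (k ≫ f) ∧ ∀ ⦃K' : C⦄, K' ∈ P → ∀ k' : K' ⟶ X, N (k' ≫ f) →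
    ∃ u : K' ⟶ K, u ≫ k = k'

def HasWeakKernelsOn (P : Set C) (N : MorClass C) : Prop :=
  ∀ ⦃X Y : C⦄, X ∈ P → Y ∈ P → ∀ f : X ⟶ Y, ∃ (K : C) (k : K ⟶ X), IsWeakKernelOn P N f k

/-- The condition (∗π₀) interpreted in the full subcategory `P`. -/
def StarPi0On (P : Set C) (N : MorClass C) {X Y : C} (f₁ f₂ : X ⟶ Y) : Prop :=
  ∀ ⦃K : C⦄ (k : K ⟶ X), IsWeakKernelOn P N f₁ k →
    ∀ ⦃Z : C⦄, Z ∈ P → ∀ g : Y ⟶ Z, (k ≫ f₁ ≫ g = k ≫ f₂ ≫ g ↔ f₁ ≫ g = f₂ ≫ g)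

/-- Every internal reflexive graph of `C` satisfies (∗π₀). -/
def ReflGraphsStarPi0 (N : MorClass C) : Prop :=
  ∀ ⦃G₁ G₀ : C⦄ (d c : G₁ ⟶ G₀) (e : G₀ ⟶ G₁), e ≫ d = 𝟙 G₀ → e ≫ c = 𝟙 G₀ →
    StarPi0 N d c

/-- Every internal reflexive graph of the full subcategory `P` satisfies (∗π₀). -/
def ReflGraphsStarPi0On (P : Set C) (N : MorClass C) : Prop :=
  ∀ ⦃G₁ G₀ : C⦄, G₁ ∈ P → G₀ ∈ P → ∀ (d c : G₁ ⟶ G₀) (e : G₀ ⟶ G₁),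
    e ≫ d = 𝟙 G₀ → e ≫ c = 𝟙 G₀ → StarPi0On P N d c

/-- Every regular epimorphism is a coequalizer of its kernel star (star-regularity condition). -/
def RegEpisCoeqOfKernelStar (N : MorClass C) : Prop :=
  ∀ ⦃X Y : C⦄ (f : X ⟶ Y), IsRegEpi f →
    ∀ ⦃P : C⦄ (u v : P ⟶ X), IsKernelPairOf f u v →
      ∀ ⦃K : C⦄ (k : K ⟶ P), IsNKernel N u k →
        IsCoequalizerOf (k ≫ u) (k ≫ v) f

/-- `f` is `N`-saturating. -/
def IsSaturating (N : MorClass C) {P' Y : C} (f : P' ⟶ Y) : Prop :=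
  ∀ ⦃X : C⦄ (n : X ⟶ Y), N n →
    ∃ (Z : C) (g : Z ⟶ X) (m : Z ⟶ P'), IsRegEpi g ∧ N m ∧ m ≫ f = g ≫ n

/-- `C` is a regular completion of `P`: `P` is a projective cover and every object of `C`
admits a monomorphism into a finite product of `P`-objects (expressed via a jointly monic
finite family). -/
def IsRegularCompletionOf (P : Set C) : Prop :=
  IsProjectiveCover P ∧
    ∀ X : C, ∃ (n : ℕ) (obj : Fin n → C) (_ : ∀ i, obj i ∈ P) (m : ∀ i, X ⟶ obj i),
      ∀ ⦃W : C⦄ (a b : W ⟶ X), (∀ i, a ≫ m i = b ≫ m i) → a = b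

/-- `C` is pointed via the ideal `N` of null morphisms. -/
def IsPointedVia (N : MorClass C) : Prop :=
  IsMorIdeal N ∧ ∀ X Y : C, ∃! f : X ⟶ Y, N f

/-- The full subcategory `P` is pointed via the ideal `N` of null morphisms. -/
def IsPointedOn (P : Set C) (N : MorClass C) : Prop :=
  IsMorIdealOn P N ∧ ∀ ⦃X Y : C⦄, X ∈ P → Y ∈ P → ∃! f : X ⟶ Y, N f

/-- `f` is a normal epimorphism (a cokernel) with respect to the ideal `N`. -/
def IsNormalEpi (N : MorClass C) {X Y : C} (f : X ⟶ Y) : Prop :=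
  ∃ (A : C) (h : A ⟶ X), N (h ≫ f) ∧
    ∀ ⦃Z : C⦄ (g : X ⟶ Z), N (h ≫ g) → ∃! t : Y ⟶ Z, f ≫ t = g

/-- The full subcategory `P` has weak finite limits. -/
def HasWeakFiniteLimitsOn (P : Set C) : Prop :=
  ∀ (J : Type) [SmallCategory J] [FinCategory J]
    (F : J ⥤ ObjectProperty.FullSubcategory (fun X : C => X ∈ P)),
    ∃ c : Cone F, ∀ c' : Cone F, Nonempty (c' ⟶ c)

/-!
Both sides are equivalent to star-regularity of the regular completion: every regular
epimorphism `f` is the coequalizer of `κ ≫ u` and `κ ≫ v`, where `(u, v)` is the kernel pair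
of `f` and `κ` the kernel of `u`. A cokernel presentation of `f` factors through `κ ≫ v`, and
conversely star-regularity exhibits `f` as the cokernel of `κ ≫ v`. Applied to the split
epimorphism `d` of a reflexive graph in `P`, star-regularity gives (∗π₀). Conversely, (∗π₀)
passes from `P` to the completion by covering a reflexive graph of the completion with one in
`P`: objects of `P` are projective, and morphisms into objects of `P` are jointly monic.
-/

section RegularEpi

theorem IsRegEpi.epi {X Y : C} {f : X ⟶ Y} (hf : IsRegEpi f) : Epi f := by
  obtain ⟨Q, p, q, hpq, hco⟩ := hf
  refine ⟨fun a b hab => ?_⟩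
  obtain ⟨h, -, hu⟩ := hco (f ≫ a) (by rw [reassoc_of% hpq])
  exact (hu a rfl).trans (hu b hab.symm).symm

theorem isRegEpi_of_comp_eq_id {X Y : C} {f : X ⟶ Y} {s : Y ⟶ X} (hs : s ≫ f = 𝟙 Y) :
    IsRegEpi f := by
  refine ⟨X, f ≫ s, 𝟙 X, by simp [hs], fun Z g hg => ⟨s ≫ g, by simpa using hg, fun t ht => ?_⟩⟩
  rw [← ht, reassoc_of% hs]

theorem isRegEpi_id (X : C) : IsRegEpi (𝟙 X) :=
  isRegEpi_of_comp_eq_id (Category.id_comp _)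

theorem IsRegEpi.isCoequalizerOf_of_isKernelPairOf {X Y R : C} {f : X ⟶ Y} (hf : IsRegEpi f)
    {u v : R ⟶ X} (hkp : IsKernelPairOf f u v) : IsCoequalizerOf u v f := by
  refine ⟨hkp.1, fun Z g hg => ?_⟩
  obtain ⟨Q, p, q, hpq, hco⟩ := hf
  obtain ⟨w, ⟨rfl, rfl⟩, -⟩ := hkp.2 p q hpq
  exact hco g (by simp [hg])

theorem IsRegularCat.exists_isPullbackSq (hC : IsRegularCat C) {X Y Z : C} (f : X ⟶ Z)
    (g : Y ⟶ Z) : ∃ (Q : C) (p₁ : Q ⟶ X) (p₂ : Q ⟶ Y), IsPullbackSq p₁ p₂ f g := by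
  have := hC.hasFiniteLimits
  refine ⟨pullback f g, pullback.fst f g, pullback.snd f g, pullback.condition,
    fun Q q₁ q₂ h => ⟨pullback.lift q₁ q₂ h, ⟨pullback.lift_fst .., pullback.lift_snd ..⟩,
      fun w ⟨h₁, h₂⟩ => pullback.hom_ext ?_ ?_⟩⟩
  · rw [h₁, pullback.lift_fst]
  · rw [h₂, pullback.lift_snd]

theorem IsRegularCat.exists_isKernelPairOf (hC : IsRegularCat C) {X Y : C} (f : X ⟶ Y) :
    ∃ (R : C) (u v : R ⟶ X), IsKernelPairOf f u v :=
  hC.exists_isPullbackSq f f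

end RegularEpi

section Pointed

variable {M : MorClass C}

theorem IsPointedVia.eq (hM : IsPointedVia M) {X Y : C} {f f' : X ⟶ Y} (hf : M f)
    (hf' : M f') : f = f' :=
  (hM.2 X Y).unique hf hf'

theorem IsRegularCat.exists_isNKernel (hC : IsRegularCat C) (hM : IsPointedVia M) {R X : C}
    (u : R ⟶ X) : ∃ (K : C) (κ : K ⟶ R), IsNKernel M u κ := by
  have := hC.hasFiniteLimits
  obtain ⟨ν, hν, -⟩ := hM.2 R X
  refine ⟨equalizer u ν, equalizer.ι u ν, ?_, fun K' k' hk' => ?_⟩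
  · rw [equalizer.condition u ν]
    exact hM.1.1 _ _ hν
  · refine ⟨equalizer.lift k' (hM.eq hk' (hM.1.1 _ _ hν)), equalizer.lift_ι .., fun w hw => ?_⟩
    rw [← cancel_mono (equalizer.ι u ν), hw, equalizer.lift_ι]

theorem IsNormalEpi.isCoequalizerOf_kernelStar (hM : IsPointedVia M) {X Y R K : C}
    {f : X ⟶ Y} (hf : IsNormalEpi M f) {u v : R ⟶ X} (hkp : IsKernelPairOf f u v)
    {κ : K ⟶ R} (hκ : IsNKernel M u κ) : IsCoequalizerOf (κ ≫ u) (κ ≫ v) f := by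
  obtain ⟨A, h, hhf, hcoker⟩ := hf
  refine ⟨by simp [hkp.1], fun Z g hg => hcoker g ?_⟩
  simp only [Category.assoc] at hg
  -- `h` factors through `κ ≫ v`, because `(0, h)` factors through the kernel pair of `f`
  obtain ⟨ν, hν, -⟩ := hM.2 A X
  obtain ⟨w, ⟨rfl, rfl⟩, -⟩ := hkp.2 ν h (hM.eq (hM.1.2 ν f hν) hhf)
  obtain ⟨w', rfl, -⟩ := hκ.2 w hν
  simpa [← hg] using hM.1.1 w' _ (hM.1.2 (κ ≫ u) g hκ.1)

theorem regEpisCoeqOfKernelStar_of_isNormalEpi (hM : IsPointedVia M)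
    (hnorm : ∀ ⦃X Y : C⦄ (f : X ⟶ Y), IsRegEpi f → IsNormalEpi M f) :
    RegEpisCoeqOfKernelStar M :=
  fun _ _ f hf _ _ _ hkp _ _ hκ => (hnorm f hf).isCoequalizerOf_kernelStar hM hkp hκ

theorem RegEpisCoeqOfKernelStar.isNormalEpi (hstar : RegEpisCoeqOfKernelStar M)
    (hC : IsRegularCat C) (hM : IsPointedVia M) {X Y : C} {f : X ⟶ Y} (hf : IsRegEpi f) :
    IsNormalEpi M f := by
  obtain ⟨R, u, v, hkp⟩ := hC.exists_isKernelPairOf f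
  obtain ⟨K, κ, hκ⟩ := hC.exists_isNKernel hM u
  have hco := hstar f hf u v hkp κ hκ
  refine ⟨K, κ ≫ v, ?_, fun Z g hg => hco.2 g (hM.eq (hM.1.2 _ g hκ.1) hg)⟩
  rw [← hco.1]
  exact hM.1.2 _ f hκ.1

end Pointed

section RegularCompletion

variable {P : Set C} {N : MorClass C}

theorem IsRegularCompletionOf.hom_ext (hP : IsRegularCompletionOf P) {X Y : C} {a b : X ⟶ Y}
    (h : ∀ ⦃Z : C⦄, Z ∈ P → ∀ m : Y ⟶ Z, a ≫ m = b ≫ m) : a = b := by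
  obtain ⟨n, obj, hobj, m, hm⟩ := hP.2 Y
  exact hm a b fun i => h (hobj i) (m i)

theorem IsPointedOn.eq (hpt : IsPointedOn P N) {X Y : C} (hX : X ∈ P) (hY : Y ∈ P)
    {f f' : X ⟶ Y} (hf : N f) (hf' : N f') : f = f' :=
  (hpt.2 hX hY).unique hf hf'

theorem extClass.comp_comp (hP : IsRegularCompletionOf P) (hpt : IsPointedOn P N) {X Y : C}
    {f : X ⟶ Y} (hf : extClass P N f) {S Z : C} (hS : S ∈ P) (hZ : Z ∈ P) (s : S ⟶ X)
    (m : Y ⟶ Z) : N (s ≫ f ≫ m) := by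
  obtain ⟨A, B, -, -, n, e, e', he, -, hn, heq⟩ := hf
  obtain ⟨l, rfl⟩ := hP.1.proj hS e he s
  rw [Category.assoc, reassoc_of% heq]
  exact hpt.1.2.1 l _ hS (hpt.1.2.2 n _ hZ hn)

theorem extClass.eq (hP : IsRegularCompletionOf P) (hpt : IsPointedOn P N) {X Y : C}
    {f f' : X ⟶ Y} (hf : extClass P N f) (hf' : extClass P N f') : f = f' := by
  obtain ⟨S, hS, e, he⟩ := hP.1.covers X
  have := he.epi
  refine hP.hom_ext fun Z hZ m => (cancel_epi e).1 ?_
  exact hpt.eq hS hZ (hf.comp_comp hP hpt hS hZ e m) (hf'.comp_comp hP hpt hS hZ e m)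

theorem extClass.restrict (hP : IsRegularCompletionOf P) (hpt : IsPointedOn P N) {X Y : C}
    (hX : X ∈ P) (hY : Y ∈ P) {f : X ⟶ Y} (hf : extClass P N f) : N f := by
  simpa using hf.comp_comp hP hpt hX hY (𝟙 X) (𝟙 Y)

theorem isMorIdeal_extClass (hP : IsRegularCompletionOf P) (hpt : IsPointedOn P N) :
    IsMorIdeal (extClass P N) := by
  constructor
  · rintro X Y Z f g ⟨A, B, -, hB, n, e, e', he, he', hn, heq⟩
    obtain ⟨A₀, hA₀, e₀, he₀⟩ := hP.1.covers X
    obtain ⟨l, hl⟩ := hP.1.proj hA₀ e he (e₀ ≫ f)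
    refine ⟨A₀, B, hA₀, hB, l ≫ n, e₀, e', he₀, he', hpt.1.2.1 l n hA₀ hn, ?_⟩
    rw [← reassoc_of% hl, heq, Category.assoc]
  · rintro X Y Z f g ⟨A, B, hA, hB, n, e, e', he, he', hn, heq⟩
    obtain ⟨B₀, hB₀, e₀, he₀⟩ := hP.1.covers Z
    obtain ⟨l, hl⟩ := hP.1.proj hB e₀ he₀ (e' ≫ g)
    refine ⟨A, B₀, hA, hB₀, n ≫ l, e, e₀, he, he₀, hpt.1.2.2 n l hB₀ hn, ?_⟩
    rw [reassoc_of% heq, ← hl, Category.assoc]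

theorem exists_extClass (hC : IsRegularCat C) (hP : IsRegularCompletionOf P)
    (hpt : IsPointedOn P N) (X Y : C) : ∃ f : X ⟶ Y, extClass P N f := by
  obtain ⟨A, hA, e, he⟩ := hP.1.covers X
  obtain ⟨B, hB, e', he'⟩ := hP.1.covers Y
  obtain ⟨n, hn, -⟩ := hpt.2 hA hB
  obtain ⟨R, r₁, r₂, hkp⟩ := hC.exists_isKernelPairOf e
  obtain ⟨S, hS, q, hq⟩ := hP.1.covers R
  have := hq.epi
  have hr : r₁ ≫ n = r₂ ≫ n := (cancel_epi q).1 <| by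
    simpa using hpt.eq hS hB (hpt.1.2.1 (q ≫ r₁) n hS hn) (hpt.1.2.1 (q ≫ r₂) n hS hn)
  obtain ⟨f, hf, -⟩ :=
    (he.isCoequalizerOf_of_isKernelPairOf hkp).2 (n ≫ e') (by rw [reassoc_of% hr])
  exact ⟨f, A, B, hA, hB, n, e, e', he, he', hn, hf⟩

theorem isPointedVia_extClass (hC : IsRegularCat C) (hP : IsRegularCompletionOf P)
    (hpt : IsPointedOn P N) : IsPointedVia (extClass P N) := by
  refine ⟨isMorIdeal_extClass hP hpt, fun X Y => ?_⟩
  obtain ⟨f, hf⟩ := exists_extClass hC hP hpt X Y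
  exact ⟨f, hf, fun f' hf' => hf'.eq hP hpt hf⟩

theorem exists_isWeakKernelOn (hwfl : HasWeakFiniteLimitsOn P) (hpt : IsPointedOn P N)
    {G₁ G₀ : C} (h₁ : G₁ ∈ P) (h₀ : G₀ ∈ P) (d : G₁ ⟶ G₀) :
    ∃ (K : C) (k : K ⟶ G₁), IsWeakKernelOn P N d k := by
  obtain ⟨ν, hν, -⟩ := hpt.2 h₁ h₀
  let O₁ : ObjectProperty.FullSubcategory (· ∈ P) := ⟨G₁, h₁⟩
  let O₀ : ObjectProperty.FullSubcategory (· ∈ P) := ⟨G₀, h₀⟩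
  let d' : O₁ ⟶ O₀ := ObjectProperty.homMk d
  let ν' : O₁ ⟶ O₀ := ObjectProperty.homMk ν
  -- a weak equalizer of `d` and the null morphism `ν`
  obtain ⟨c, hc⟩ := hwfl WalkingParallelPair (parallelPair d' ν')
  have hcν : (c.π.app .zero).hom ≫ d = (c.π.app .zero).hom ≫ ν :=
    (congrArg (·.hom) (c.w .left)).trans (congrArg (·.hom) (c.w .right)).symm
  refine ⟨c.pt.obj, (c.π.app .zero).hom, c.pt.property, ?_, fun K' hK' k' hk' => ?_⟩
  · rw [hcν]
    exact hpt.1.2.1 _ _ c.pt.property hν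
  · have hk'ν : k' ≫ d = k' ≫ ν := hpt.eq hK' h₀ hk' (hpt.1.2.1 k' ν hK' hν)
    let ι : (⟨K', hK'⟩ : ObjectProperty.FullSubcategory (· ∈ P)) ⟶ O₁ :=
      ObjectProperty.homMk k'
    obtain ⟨φ⟩ := hc (Fork.ofι ι (InducedCategory.hom_ext hk'ν))
    exact ⟨φ.hom.hom, congrArg (·.hom) (φ.w .zero)⟩

theorem reflGraphsStarPi0On_of_regEpisCoeqOfKernelStar (hC : IsRegularCat C)
    (hP : IsRegularCompletionOf P) (hpt : IsPointedOn P N)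
    (hstar : RegEpisCoeqOfKernelStar (extClass P N)) : ReflGraphsStarPi0On P N := by
  have hM := isPointedVia_extClass hC hP hpt
  rintro G₁ G₀ - hG₀ d c e hed hec K k ⟨-, hkd, hk⟩ Z hZ g
  refine ⟨fun hg => ?_, fun h => by rw [h]⟩
  obtain ⟨R, u, v, hkp⟩ := hC.exists_isKernelPairOf d
  obtain ⟨L, κ, hκ⟩ := hC.exists_isNKernel hM u
  obtain ⟨S, hS, π, hπ⟩ := hP.1.covers L
  -- `π ≫ κ ≫ v` factors through the weak kernel `k` of `d`, where `d ≫ g` and `c ≫ g` agree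
  have hvd : N ((π ≫ κ ≫ v) ≫ d) := by
    refine extClass.restrict hP hpt hS hG₀ ?_
    simpa [hkp.1] using hM.1.1 π _ (hM.1.2 _ d hκ.1)
  obtain ⟨w, hw⟩ := hk hS _ hvd
  have hvc : extClass P N ((κ ≫ v) ≫ c ≫ g) := by
    refine ⟨S, Z, hS, hZ, w ≫ k ≫ d ≫ g, π, 𝟙 Z, hπ, isRegEpi_id Z, ?_, ?_⟩
    · simpa using hpt.1.2.1 w _ hS (hpt.1.2.2 _ g hZ hkd)
    · simp [hg, reassoc_of% hw]
  obtain ⟨t, ht, -⟩ := (hstar d (isRegEpi_of_comp_eq_id hed) u v hkp κ hκ).2 (c ≫ g)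
    (hM.eq (hM.1.2 _ _ hκ.1) hvc)
  calc d ≫ g = d ≫ e ≫ c ≫ g := by rw [reassoc_of% hec]
    _ = c ≫ g := by rw [← ht, reassoc_of% hed]

theorem exists_reflGraph_cover (hC : IsRegularCat C) (hP : IsProjectiveCover P) {R X : C}
    {u v : R ⟶ X} {δ : X ⟶ R} (hδu : δ ≫ u = 𝟙 X) (hδv : δ ≫ v = 𝟙 X) :
    ∃ (G₁ G₀ : C) (_ : G₁ ∈ P) (_ : G₀ ∈ P) (d c : G₁ ⟶ G₀) (e : G₀ ⟶ G₁) (p : G₀ ⟶ X)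
      (t : G₁ ⟶ R), e ≫ d = 𝟙 G₀ ∧ e ≫ c = 𝟙 G₀ ∧ IsRegEpi p ∧ Epi t ∧
        t ≫ u = d ≫ p ∧ t ≫ v = c ≫ p := by
  obtain ⟨G₀, hG₀, p, hp⟩ := hP.covers X
  obtain ⟨Q₁, πR, πa, hQ₁⟩ := hC.exists_isPullbackSq u p
  obtain ⟨Q, ρ₁, ρb, hQ⟩ := hC.exists_isPullbackSq (πR ≫ v) p
  obtain ⟨s₁, ⟨hs₁R, hs₁a⟩, -⟩ := hQ₁.2 (p ≫ δ) (𝟙 G₀) (by simp [hδu])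
  obtain ⟨s, ⟨hsρ, hsb⟩, -⟩ := hQ.2 s₁ (𝟙 G₀) (by simp [reassoc_of% hs₁R, hδv])
  obtain ⟨G₁, hG₁, q, hq⟩ := hP.covers Q
  obtain ⟨e, he⟩ := hP.proj hG₀ q hq s
  have := (hC.regEpiStable πR πa u p hQ₁ hp).epi
  have := (hC.regEpiStable ρ₁ ρb _ p hQ hp).epi
  have := hq.epi
  refine ⟨G₁, G₀, hG₁, hG₀, q ≫ ρ₁ ≫ πa, q ≫ ρb, e, p, q ≫ ρ₁ ≫ πR, ?_, ?_, hp, inferInstance,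
    ?_, ?_⟩
  · simp [reassoc_of% he, reassoc_of% hsρ, hs₁a]
  · simp [reassoc_of% he, hsb]
  · simp [hQ₁.1]
  · simp [hQ.1]

theorem regEpisCoeqOfKernelStar_of_reflGraphsStarPi0On (hC : IsRegularCat C)
    (hP : IsRegularCompletionOf P) (hwfl : HasWeakFiniteLimitsOn P) (hpt : IsPointedOn P N)
    (hstar : ReflGraphsStarPi0On P N) : RegEpisCoeqOfKernelStar (extClass P N) := by
  intro X Y f hf R u v hkp K κ hκ
  refine ⟨by simp [hkp.1], fun Z g hg => (hf.isCoequalizerOf_of_isKernelPairOf hkp).2 g ?_⟩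
  simp only [Category.assoc] at hg
  obtain ⟨δ, ⟨hδu, hδv⟩, -⟩ := hkp.2 (𝟙 X) (𝟙 X) rfl
  obtain ⟨G₁, G₀, hG₁, hG₀, d, c, e, p, t, hed, hec, hp, ht, htu, htv⟩ :=
    exists_reflGraph_cover hC hP.1 hδu hδv
  obtain ⟨L, k, hk⟩ := exists_isWeakKernelOn hwfl hpt hG₁ hG₀ d
  obtain ⟨w, hw, -⟩ := hκ.2 (k ≫ t)
    ⟨L, G₀, hk.1, hG₀, k ≫ d, 𝟙 L, p, isRegEpi_id L, hp, hk.2.1, by simp [htu]⟩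
  have hkdc : k ≫ d ≫ p ≫ g = k ≫ c ≫ p ≫ g :=
    calc k ≫ d ≫ p ≫ g = w ≫ κ ≫ u ≫ g := by rw [← reassoc_of% htu, reassoc_of% hw]
      _ = w ≫ κ ≫ v ≫ g := by rw [hg]
      _ = k ≫ c ≫ p ≫ g := by rw [reassoc_of% hw, reassoc_of% htv]
  have hdc : d ≫ p ≫ g = c ≫ p ≫ g := hP.hom_ext fun Z' hZ' m => by
    simpa using (hstar hG₁ hG₀ d c e hed hec k hk hZ' (p ≫ g ≫ m)).1 ((reassoc_of% hkdc) m)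
  exact (cancel_epi t).1 (by rw [reassoc_of% htu, reassoc_of% htv, hdc])

end RegularCompletion

/-- Let P be a pointed category with weak finite limits. The regular
completion C of P is a normal category (pointed, with every regular epimorphism a normal
epimorphism) iff every internal reflexive graph in P satisfies (∗π₀) with respect to the
ideal of null morphisms of P. -/
theorem statement15 (hC : IsRegularCat C) (P : Set C) (hP : IsRegularCompletionOf P)
    (hwfl : HasWeakFiniteLimitsOn P) (N : MorClass C) (hpt : IsPointedOn P N) :
    (IsPointedVia (extClass P N) ∧
        ∀ ⦃X Y : C⦄ (f : X ⟶ Y), IsRegEpi f → IsNormalEpi (extClass P N) f) ↔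
      ReflGraphsStarPi0On P N := by
  have hM := isPointedVia_extClass hC hP hpt
  constructor
  · rintro ⟨-, hnorm⟩
    exact reflGraphsStarPi0On_of_regEpisCoeqOfKernelStar hC hP hpt
      (regEpisCoeqOfKernelStar_of_isNormalEpi hM hnorm)
  · intro hstar
    have hsr := regEpisCoeqOfKernelStar_of_reflGraphsStarPi0On hC hP hwfl hpt hstar
    exact ⟨hM, fun X Y f hf => hsr.isNormalEpi hC hM hf⟩
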